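/- Let A be an integral domain which is an ℝ-algebra and let d > 2 be a natural number. Define Σ_d := {ξ ∈ ℝ : ξ ≠ 0 and Σ_{n=0}^{⌊(d−1)/2⌋} (−1)^n·(d choose 2n+1)·ξ^{d−(2n+1)} = 0}, the set of nonzero real roots of the dehomogenized binary form Q_d(x, 1). Let f ∈ Quaternion A have scalar part s ≠ 0 and vector part v = v₁i + v₂j + v₃k with v ≠ 0, and set N := v₁² + v₂² + v₃² ∈ A. Then f^d has zero vector part if and only if there exists ξ ∈ Σ_d with s² = algebraMap ℝ A (ξ²)·N. (Proposition 7.4: the *-power f^{*d} is slice preserving exactly when f₀² = ξ²·f_v^s for some ξ ∈ Σ_d.) -/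

import Mathlib

open Quaternion

/-- `Σ_d`: the nonzero real roots of the dehomogenized binary form `Q_d(x, 1)`. -/
def SigmaSet (d : ℕ) : Set ℝ :=
  {ξ : ℝ | ξ ≠ 0 ∧
    ∑ n ∈ Finset.range ((d - 1) / 2 + 1),
      (-1 : ℝ) ^ n * (d.choose (2 * n + 1) : ℝ) * ξ ^ (d - (2 * n + 1)) = 0}

/-!
Write `f = s + v` with `s = f.re` and `v = f.im`, so that `v² = -N`. The binomial theorem gives
`f^d = a + B(s, N) v` with `B(s, N) = ∑ C(d, 2n+1) s^(d-2n-1) (-N)^n`, so `f^d` is scalar exactly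
when `B(s, N) = 0`. Over the fraction field of `A`, `B(s, N) = s^(d-1) q(N / s²)` for a real
polynomial `q` of degree at most `(d-1)/2`. De Moivre's formula for `(cos θ + i sin θ)^d` shows that
`q` vanishes at the distinct numbers `tan²(kπ/d)`, `1 ≤ k ≤ (d-1)/2`, so `q` splits over `ℝ` and
`N / s²` must be one of its roots. These roots are positive, as `q > 0` on `(-∞, 0]`, hence they are
exactly the `1/ξ²` with `ξ ∈ Σ_d`.
-/

open Polynomial

/-- `Q_d(x, y) = y · imPowCoeff d x (y²)`. -/
def imPowCoeff {R : Type*} [CommRing R] (d : ℕ) (s N : R) : R :=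
  ∑ n ∈ Finset.range ((d - 1) / 2 + 1), (d.choose (2 * n + 1) : R) * s ^ (d - (2 * n + 1)) * (-N) ^ n

theorem map_imPowCoeff {R S : Type*} [CommRing R] [CommRing S] (φ : R →+* S) (d : ℕ) (s N : R) :
    φ (imPowCoeff d s N) = imPowCoeff d (φ s) (φ N) := by
  simp [imPowCoeff]

theorem sum_odd_choose_eq_imPowCoeff {R : Type*} [CommRing R] (d : ℕ) (s N : R) :
    ∑ k ∈ Finset.range (d + 1) with Odd k, (d.choose k : R) * s ^ (d - k) * (-N) ^ (k / 2) =
      imPowCoeff d s N := by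
  set f : ℕ → R := fun k => d.choose k * s ^ (d - k) * (-N) ^ (k / 2)
  have hinj : Set.InjOn (fun n => 2 * n + 1) (Finset.range ((d - 1) / 2 + 1) : Set ℕ) :=
    fun a _ b _ h => by simpa using h
  calc ∑ k ∈ Finset.range (d + 1) with Odd k, f k
      = ∑ k ∈ (Finset.range ((d - 1) / 2 + 1)).image (fun n => 2 * n + 1), f k := by
        refine Finset.sum_subset (fun k hk => ?_) fun k hk hk' => ?_
        · simp only [Finset.mem_filter, Finset.mem_range] at hk
          obtain ⟨n, rfl⟩ := hk.2
          exact Finset.mem_image.mpr ⟨n, by simp only [Finset.mem_range]; omega, rfl⟩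
        · obtain ⟨n, -, rfl⟩ := Finset.mem_image.mp hk
          simp only [Finset.mem_filter, Finset.mem_range, odd_two_mul_add_one, and_true,
            not_lt] at hk'
          simp [f, Nat.choose_eq_zero_of_lt (Nat.lt_of_succ_le hk')]
    _ = imPowCoeff d s N := by
        rw [Finset.sum_image hinj, imPowCoeff]
        refine Finset.sum_congr rfl fun n _ => ?_
        simp [f, Nat.mul_add_div two_pos]

theorem exists_add_pow_eq_algebraMap_add_imPowCoeff_smul {S R : Type*} [CommRing S] [Ring R]
    [Algebra S R] (d : ℕ) (s N : S) {v : R} (hv : v ^ 2 = -algebraMap S R N) :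
    ∃ a : S, (algebraMap S R s + v) ^ d = algebraMap S R a + imPowCoeff d s N • v := by
  have hterm (k : ℕ) : v ^ k * algebraMap S R s ^ (d - k) * d.choose k =
      (d.choose k * s ^ (d - k) * (-N) ^ (k / 2)) • v ^ (k % 2) := by
    have hvk : v ^ k = (-N) ^ (k / 2) • v ^ (k % 2) := by
      rw [← Nat.div_add_mod k 2, pow_add, pow_mul, hv, ← map_neg, ← map_pow, ← Algebra.smul_def,
        Nat.mul_add_div two_pos, Nat.mul_add_mod_self_left, Nat.mod_div_self, add_zero, Nat.mod_mod]
    rw [hvk, ← map_pow, ← map_natCast (algebraMap S R), mul_assoc, ← map_mul, ← Algebra.commutes,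
      ← Algebra.smul_def, smul_smul]
    ring_nf
  refine ⟨∑ k ∈ Finset.range (d + 1) with ¬Odd k, d.choose k * s ^ (d - k) * (-N) ^ (k / 2), ?_⟩
  rw [add_comm, (Commute.add_pow (Algebra.commute_algebraMap_right s v)),
    ← sum_odd_choose_eq_imPowCoeff, ← Finset.sum_filter_add_sum_filter_not _ Odd, add_comm,
    map_sum, Finset.sum_smul]
  simp only [hterm]
  congr 1 <;> refine Finset.sum_congr rfl fun k hk => ?_
  · rw [Nat.not_odd_iff.mp (Finset.mem_filter.mp hk).2, pow_zero, Algebra.smul_def, mul_one]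
  · rw [Nat.odd_iff.mp (Finset.mem_filter.mp hk).2, pow_one]

theorem Quaternion.im_pow {A : Type*} [CommRing A] (f : ℍ[A]) (d : ℕ) :
    (f ^ d).im = imPowCoeff d f.re (normSq f.im) • f.im := by
  obtain ⟨a, ha⟩ := exists_add_pow_eq_algebraMap_add_imPowCoeff_smul (R := ℍ[A]) d f.re
    (normSq f.im) (v := f.im) (by rw [im_sq, algebraMap_def])
  rw [algebraMap_def, re_add_im] at ha
  rw [ha, im_add, im_coe, zero_add, im_smul, im_idem]

noncomputable def tanSqPoly (d : ℕ) : ℝ[X] :=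
  ∑ n ∈ Finset.range ((d - 1) / 2 + 1), C (d.choose (2 * n + 1) : ℝ) * (-X) ^ n

theorem imPowCoeff_eq_pow_mul_aeval {K : Type*} [Field K] [Algebra ℝ K] (d : ℕ) {s : K}
    (hs : s ≠ 0) (N : K) :
    imPowCoeff d s N = s ^ (d - 1) * aeval (N / s ^ 2) (tanSqPoly d) := by
  simp only [imPowCoeff, tanSqPoly, map_sum, map_mul, map_pow, map_neg, aeval_X,
    Finset.mul_sum, map_natCast]
  refine Finset.sum_congr rfl fun n _ => ?_
  rcases lt_or_ge d (2 * n + 1) with h | h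
  · simp [Nat.choose_eq_zero_of_lt h]
  · rw [show d - 1 = d - (2 * n + 1) + 2 * n by omega, pow_add, pow_mul, ← neg_div, div_pow]
    field_simp

theorem tanSqPoly_eval_pos_of_nonpos {d : ℕ} (hd : 0 < d) {r : ℝ} (hr : r ≤ 0) :
    0 < (tanSqPoly d).eval r := by
  rw [tanSqPoly, eval_finsetSum, Finset.sum_range_succ']
  simp only [eval_mul, eval_C, eval_pow, eval_neg, eval_X, pow_zero, mul_one, mul_zero, zero_add,
    Nat.choose_one_right]
  exact add_pos_of_nonneg_of_pos
    (Finset.sum_nonneg fun n _ => mul_nonneg (Nat.cast_nonneg _) (pow_nonneg (neg_nonneg.mpr hr) _))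
    (by exact_mod_cast hd)

theorem tanSqPoly_ne_zero {d : ℕ} (hd : 0 < d) : tanSqPoly d ≠ 0 := fun h =>
  (tanSqPoly_eval_pos_of_nonpos hd le_rfl).ne' (by simp [h])

theorem natDegree_tanSqPoly_le (d : ℕ) : (tanSqPoly d).natDegree ≤ (d - 1) / 2 :=
  natDegree_sum_le_of_forall_le _ _ fun n hn => (natDegree_C_mul_le _ _).trans <|
    (natDegree_pow_le_of_le (m := 1) n (by simp)).trans (by simpa [Nat.lt_succ_iff] using hn)

theorem mem_SigmaSet_iff {d : ℕ} {ξ : ℝ} :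
    ξ ∈ SigmaSet d ↔ ξ ≠ 0 ∧ (tanSqPoly d).IsRoot (ξ ^ 2)⁻¹ := by
  refine and_congr_right fun hξ => ?_
  have h : ∑ n ∈ Finset.range ((d - 1) / 2 + 1),
      (-1 : ℝ) ^ n * (d.choose (2 * n + 1) : ℝ) * ξ ^ (d - (2 * n + 1)) = imPowCoeff d ξ 1 :=
    Finset.sum_congr rfl fun n _ => by ring
  rw [h, imPowCoeff_eq_pow_mul_aeval d hξ, one_div, coe_aeval_eq_eval, mul_eq_zero,
    or_iff_right (pow_ne_zero _ hξ), IsRoot.def]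

section Trigonometric

open Real

theorem imPowCoeff_cos_sin_sq_mul_sin (d : ℕ) (θ : ℝ) :
    imPowCoeff d (cos θ) (sin θ ^ 2) * sin θ = sin (d * θ) := by
  obtain ⟨a, ha⟩ := exists_add_pow_eq_algebraMap_add_imPowCoeff_smul (R := ℂ) d (cos θ)
    (sin θ ^ 2) (v := sin θ * Complex.I) (by simp [mul_pow])
  have hmoivre := Complex.cos_add_sin_mul_I_pow d θ
  rw [Complex.coe_algebraMap] at ha
  rw [← Complex.ofReal_cos, ← Complex.ofReal_sin, ha] at hmoivre
  simpa [← Complex.ofReal_natCast, ← Complex.ofReal_mul, ← Complex.ofReal_cos,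
    ← Complex.ofReal_sin] using congrArg Complex.im hmoivre

theorem tanSqPoly_isRoot_tan_sq {d : ℕ} {θ : ℝ} (hdθ : sin (d * θ) = 0) (hsin : sin θ ≠ 0)
    (hcos : cos θ ≠ 0) : (tanSqPoly d).IsRoot (tan θ ^ 2) := by
  have h := imPowCoeff_cos_sin_sq_mul_sin d θ
  rw [hdθ, imPowCoeff_eq_pow_mul_aeval d hcos, coe_aeval_eq_eval, ← div_pow,
    ← tan_eq_sin_div_cos] at h
  simpa [hsin, hcos] using h

theorem nat_mul_pi_div_mem_Ioo {d k : ℕ} (hk : 0 < k) (hkd : 2 * k < d) :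
    k * π / d ∈ Set.Ioo 0 (π / 2) := by
  have hd : (0 : ℝ) < d := by exact_mod_cast (by omega : 0 < d)
  have hkd' : (2 * k : ℝ) < d := by exact_mod_cast hkd
  refine ⟨by positivity, ?_⟩
  rw [div_lt_iff₀ hd]
  nlinarith [pi_pos]

theorem injOn_tan_sq : Set.InjOn (fun θ => tan θ ^ 2) (Set.Ioo 0 (π / 2)) := by
  intro a ⟨ha0, ha1⟩ b ⟨hb0, hb1⟩ hab
  rw [pow_left_inj₀ (tan_pos_of_pos_of_lt_pi_div_two ha0 ha1).le
    (tan_pos_of_pos_of_lt_pi_div_two hb0 hb1).le two_ne_zero] at hab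
  exact strictMonoOn_tan.injOn ⟨by linarith, ha1⟩ ⟨by linarith, hb1⟩ hab

theorem tanSqPoly_splits {d : ℕ} (hd : 0 < d) : (tanSqPoly d).Splits := by
  set m := (d - 1) / 2
  have hθ (k : ℕ) (hk : k ∈ Finset.Icc 1 m) : k * π / d ∈ Set.Ioo 0 (π / 2) := by
    rw [Finset.mem_Icc] at hk
    exact nat_mul_pi_div_mem_Ioo (by omega) (by omega)
  have hinj : Set.InjOn (fun k : ℕ => tan (k * π / d) ^ 2) (Finset.Icc 1 m) := by
    refine injOn_tan_sq.comp (fun a _ b _ hab => ?_) hθ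
    have hd' : (d : ℝ) ≠ 0 := by exact_mod_cast hd.ne'
    field_simp at hab
    exact_mod_cast hab
  have hroots : ((Finset.Icc 1 m).image fun k : ℕ => tan (k * π / d) ^ 2).val ≤
      (tanSqPoly d).roots := by
    refine (Multiset.le_iff_subset (Finset.nodup _)).mpr fun x hx => ?_
    obtain ⟨k, hk, rfl⟩ := Finset.mem_image.mp (Finset.mem_val.mp hx)
    obtain ⟨h0, h1⟩ := hθ k hk
    refine (mem_roots (tanSqPoly_ne_zero hd)).mpr (tanSqPoly_isRoot_tan_sq ?_ ?_ ?_)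
    · rw [mul_div_cancel₀ _ (by exact_mod_cast hd.ne' : (d : ℝ) ≠ 0), sin_nat_mul_pi]
    · exact (sin_pos_of_pos_of_lt_pi h0 (by linarith)).ne'
    · exact (cos_pos_of_mem_Ioo ⟨by linarith, h1⟩).ne'
  have hcard := Multiset.card_le_card hroots
  rw [Finset.card_val, Finset.card_image_of_injOn hinj, Nat.card_Icc, Nat.add_sub_cancel] at hcard
  exact splits_iff_card_roots.mpr <| le_antisymm (card_roots' _)
    ((natDegree_tanSqPoly_le d).trans hcard)

end Trigonometric

theorem aeval_tanSqPoly_eq_zero_iff {K : Type*} [Field K] [Algebra ℝ K] {d : ℕ} (hd : 0 < d)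
    (t : K) : aeval t (tanSqPoly d) = 0 ↔ ∃ ξ ∈ SigmaSet d, t = algebraMap ℝ K (ξ ^ 2)⁻¹ := by
  constructor
  · intro ht
    have hmem : t ∈ (tanSqPoly d).aroots K := mem_aroots.mpr ⟨tanSqPoly_ne_zero hd, ht⟩
    rw [aroots, (tanSqPoly_splits hd).roots_map_of_injective (algebraMap ℝ K).injective,
      Multiset.mem_map] at hmem
    obtain ⟨r, hr, rfl⟩ := hmem
    have hroot := isRoot_of_mem_roots hr
    have hr0 : 0 < r := lt_of_not_ge fun h => (tanSqPoly_eval_pos_of_nonpos hd h).ne' hroot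
    have hξ : ((√r)⁻¹ ^ 2)⁻¹ = r := by rw [inv_pow, inv_inv, Real.sq_sqrt hr0.le]
    exact ⟨(√r)⁻¹, mem_SigmaSet_iff.mpr ⟨by positivity, by rwa [hξ]⟩, by rw [hξ]⟩
  · rintro ⟨ξ, hξ, rfl⟩
    rw [aeval_algebraMap_apply, coe_aeval_eq_eval, (mem_SigmaSet_iff.mp hξ).2, map_zero]

theorem imPowCoeff_eq_zero_iff {A : Type*} [CommRing A] [IsDomain A] [Algebra ℝ A] {d : ℕ}
    (hd : 0 < d) {s : A} (hs : s ≠ 0) (N : A) :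
    imPowCoeff d s N = 0 ↔ ∃ ξ ∈ SigmaSet d, s ^ 2 = algebraMap ℝ A (ξ ^ 2) * N := by
  let ι := algebraMap A (FractionRing A)
  have hι : Function.Injective ι := IsFractionRing.injective A (FractionRing A)
  have hs' : ι s ≠ 0 := (map_ne_zero_iff ι hι).mpr hs
  rw [← map_eq_zero_iff ι hι, map_imPowCoeff, imPowCoeff_eq_pow_mul_aeval d hs', mul_eq_zero,
    or_iff_right (pow_ne_zero _ hs'), aeval_tanSqPoly_eq_zero_iff hd]
  refine exists_congr fun ξ => and_congr_right fun hξ => ?_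
  have hc : ι (algebraMap ℝ A (ξ ^ 2)) ≠ 0 := (map_ne_zero_iff ι hι).mpr
    ((map_ne_zero_iff _ (algebraMap ℝ A).injective).mpr (pow_ne_zero 2 hξ.1))
  rw [map_inv₀, IsScalarTower.algebraMap_apply ℝ A (FractionRing A), div_eq_iff (pow_ne_zero 2 hs'),
    eq_inv_mul_iff_mul_eq₀ hc, ← map_mul, ← map_pow, hι.eq_iff, eq_comm]

theorem pow_scalar_iff_root_relation {A : Type*} [CommRing A] [IsDomain A] [Algebra ℝ A]
    (d : ℕ) (hd : 2 < d) (f : Quaternion A)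
    (hre : f.re ≠ 0) (him : f.im ≠ 0) (N : A)
    (hN : N = f.imI ^ 2 + f.imJ ^ 2 + f.imK ^ 2) :
    (f ^ d).im = 0 ↔ ∃ ξ ∈ SigmaSet d, f.re ^ 2 = algebraMap ℝ A (ξ ^ 2) * N := by
  have hnormSq : normSq f.im = N := by simp [normSq_def', hN]
  rw [f.im_pow, hnormSq, smul_eq_zero, or_iff_left him]
  exact imPowCoeff_eq_zero_iff (by omega) hre N
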